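/- arXiv:2110.06726 — 3 statements merged into one kernel-verified Lean document; each statement's English description precedes it below -/
import Mathlib

section
/- The conjunction of two directed LTL formulas is semantically equivalent (over finite traces) to a finite disjunction of directed LTL formulas. -/
/-- Syntax of LTL (over finite traces), with literals, Boolean connectives,
negation, next, finally and globally. -/
inductive LTL (P : Type) : Type
  | atom  : P → LTL P
  | natom : P → LTL P
  | and   : LTL P → LTL P → LTL P
  | or    : LTL P → LTL P → LTL P
  | not   : LTL P → LTL P
  | next  : LTL P → LTL P
  | fin   : LTL P → LTL P
  | glob  : LTL P → LTL P

/-- Finite-trace semantics, positions are 1-based: `Sat t φ i` means `t, i ⊨ φ`. -/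
def Sat {P : Type} (t : List (Set P)) : LTL P → ℕ → Prop
  | .atom p,  i => p ∈ t.getD (i - 1) ∅
  | .natom p, i => p ∉ t.getD (i - 1) ∅
  | .and φ ψ, i => Sat t φ i ∧ Sat t ψ i
  | .or φ ψ,  i => Sat t φ i ∨ Sat t ψ i
  | .not φ,   i => ¬ Sat t φ i
  | .next φ,  i => i < t.length ∧ Sat t φ (i + 1)
  | .fin φ,   i => ∃ j, i ≤ j ∧ j ≤ t.length ∧ Sat t φ j
  | .glob φ,  i => ∀ j, i ≤ j → j ≤ t.length → Sat t φ j

/-- `X^n φ`: n-fold application of the next operator. -/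
def iterX {P : Type} : ℕ → LTL P → LTL P
  | 0, φ => φ
  | n + 1, φ => .next (iterX n φ)

/-- `last := ¬ X (p ∨ ¬ p)`, holding exactly at the final position. -/
def lastF {P : Type} (p : P) : LTL P :=
  .not (.next (.or (.atom p) (.natom p)))

/-- A literal: an atomic proposition with a polarity. -/
abbrev Lit (P : Type) := P × Bool

def Lit.toLTL {P : Type} : Lit P → LTL P
  | (p, true) => .atom p
  | (p, false) => .natom p

/-- A partial symbol: a nonempty conjunction of literals. -/
structure PSym (P : Type) where
  head : Lit P
  tail : List (Lit P)

/-- The LTL formula (conjunction of literals) corresponding to a partial symbol. -/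
def PSym.toLTL {P : Type} (s : PSym P) : LTL P :=
  s.tail.foldl (fun a l => .and a l.toLTL) s.head.toLTL

/-- Directed LTL formulas:
`φ ::= Xⁿ s | F Xⁿ s | Xⁿ (s ∧ φ) | F Xⁿ (s ∧ φ)` with `s` a partial symbol. -/
inductive DLTL (P : Type) : Type
  | xs     : ℕ → PSym P → DLTL P
  | fxs    : ℕ → PSym P → DLTL P
  | xcons  : ℕ → PSym P → DLTL P → DLTL P
  | fxcons : ℕ → PSym P → DLTL P → DLTL P

/-- Translation of directed formulas to LTL. -/
def DLTL.toLTL {P : Type} : DLTL P → LTL P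
  | .xs n s => iterX n s.toLTL
  | .fxs n s => .fin (iterX n s.toLTL)
  | .xcons n s φ => iterX n (.and s.toLTL φ.toLTL)
  | .fxcons n s φ => .fin (iterX n (.and s.toLTL φ.toLTL))

/-! ### Auxiliary machinery for the proof -/

section Aux

variable {P : Type}

/-- Whether the head of a directed formula is `F`-wrapped. -/
def dIsF : DLTL P → Bool
  | .xs _ _ => false
  | .fxs _ _ => true
  | .xcons _ _ _ => false
  | .fxcons _ _ _ => true

/-- The `Xⁿ` exponent at the head. -/
def dBnd : DLTL P → ℕ
  | .xs n _ => n
  | .fxs n _ => n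
  | .xcons n _ _ => n
  | .fxcons n _ _ => n

/-- The head partial symbol. -/
def dSym : DLTL P → PSym P
  | .xs _ s => s
  | .fxs _ s => s
  | .xcons _ s _ => s
  | .fxcons _ s _ => s

/-- The (optional) continuation. -/
def dRest : DLTL P → Option (DLTL P)
  | .xs _ _ => none
  | .fxs _ _ => none
  | .xcons _ _ φ => some φ
  | .fxcons _ _ φ => some φ

/-- Build a directed formula from head data. -/
def dMk : Bool → ℕ → PSym P → Option (DLTL P) → DLTL P
  | false, n, s, none => .xs n s
  | true, n, s, none => .fxs n s
  | false, n, s, some φ => .xcons n s φ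
  | true, n, s, some φ => .fxcons n s φ

/-- Size of a directed formula. -/
def dSz : DLTL P → ℕ
  | .xs _ _ => 1
  | .fxs _ _ => 1
  | .xcons _ _ φ => dSz φ + 1
  | .fxcons _ _ φ => dSz φ + 1

def dSzO : Option (DLTL P) → ℕ
  | none => 0
  | some φ => dSz φ

/-- Satisfaction of an optional continuation. -/
def SatO (t : List (Set P)) : Option (DLTL P) → ℕ → Prop
  | none, _ => True
  | some φ, i => Sat t φ.toLTL i

lemma dMk_eta (φ : DLTL P) : dMk (dIsF φ) (dBnd φ) (dSym φ) (dRest φ) = φ := by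
  cases φ <;> rfl

lemma dSz_pos (φ : DLTL P) : 1 ≤ dSz φ := by
  cases φ <;> simp [dSz]

lemma dSz_eq (φ : DLTL P) : dSz φ = dSzO (dRest φ) + 1 := by
  cases φ <;> rfl

lemma dSz_dMk (b : Bool) (n : ℕ) (s : PSym P) (r : Option (DLTL P)) :
    dSz (dMk b n s r) = dSzO r + 1 := by
  cases b <;> cases r <;> rfl

lemma sat_iterX (t : List (Set P)) (χ : LTL P) :
    ∀ n i, i ≤ t.length → (Sat t (iterX n χ) i ↔ i + n ≤ t.length ∧ Sat t χ (i + n)) := by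
  intro n
  induction n with
  | zero => intro i hi; simpa [iterX] using fun _ => hi
  | succ n ihn =>
    intro i hi
    show (i < t.length ∧ Sat t (iterX n χ) (i + 1)) ↔ _
    constructor
    · rintro ⟨h1, h2⟩
      have h3 := (ihn (i + 1) h1).mp h2
      refine ⟨by omega, ?_⟩
      have e : i + 1 + n = i + (n + 1) := by omega
      rw [e] at h3; exact h3.2
    · rintro ⟨h1, h2⟩
      have hl : i < t.length := by omega
      refine ⟨hl, (ihn (i + 1) hl).mpr ⟨by omega, ?_⟩⟩
      have e : i + 1 + n = i + (n + 1) := by omega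
      rw [e]; exact h2

lemma sat_dmk_false (t : List (Set P)) (n : ℕ) (s : PSym P) (r : Option (DLTL P))
    (i : ℕ) (hi : i ≤ t.length) :
    Sat t (dMk false n s r).toLTL i ↔
      (i + n ≤ t.length ∧ Sat t s.toLTL (i + n) ∧ SatO t r (i + n)) := by
  cases r with
  | none =>
    show Sat t (iterX n s.toLTL) i ↔ _
    rw [sat_iterX t _ n i hi]
    simp [SatO]
  | some φ =>
    show Sat t (iterX n (.and s.toLTL φ.toLTL)) i ↔ _
    rw [sat_iterX t _ n i hi]
    exact Iff.rfl

lemma sat_dmk_true (t : List (Set P)) (n : ℕ) (s : PSym P) (r : Option (DLTL P))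
    (i : ℕ) :
    Sat t (dMk true n s r).toLTL i ↔
      ∃ q, i + n ≤ q ∧ q ≤ t.length ∧ Sat t s.toLTL q ∧ SatO t r q := by
  have key : ∀ χ : LTL P,
      (Sat t (.fin (iterX n χ)) i ↔ ∃ q, i + n ≤ q ∧ q ≤ t.length ∧ Sat t χ q) := by
    intro χ
    show (∃ j, i ≤ j ∧ j ≤ t.length ∧ Sat t (iterX n χ) j) ↔ _
    constructor
    · rintro ⟨j, hj1, hj2, hj3⟩
      have h := (sat_iterX t χ n j hj2).mp hj3
      exact ⟨j + n, by omega, h.1, h.2⟩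
    · rintro ⟨q, hq1, hq2, hq3⟩
      refine ⟨q - n, by omega, by omega, (sat_iterX t χ n (q - n) (by omega)).mpr ⟨by omega, ?_⟩⟩
      have e : q - n + n = q := by omega
      rw [e]; exact hq3
  cases r with
  | none =>
    have h := key s.toLTL
    show Sat t (.fin (iterX n s.toLTL)) i ↔ _
    rw [h]
    simp [SatO]
  | some φ =>
    have h := key (.and s.toLTL φ.toLTL)
    show Sat t (.fin (iterX n (.and s.toLTL φ.toLTL))) i ↔ _
    rw [h]
    exact Iff.rfl

/-- `l` is a good disjunction for the conjunction of `φ` and `ψ`. -/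
abbrev Good (φ ψ : DLTL P) (l : List (DLTL P)) : Prop :=
  l ≠ [] ∧ ∀ (t : List (Set P)) (i : ℕ), i ≤ t.length →
    ((Sat t φ.toLTL i ∧ Sat t ψ.toLTL i) ↔ ∃ d ∈ l, Sat t d.toLTL i)

/-- `l` is a good disjunction for an optional continuation conjoined with `χ`. -/
abbrev GoodO (r : Option (DLTL P)) (χ : DLTL P) (l : List (DLTL P)) : Prop :=
  l ≠ [] ∧ ∀ (t : List (Set P)) (i : ℕ), i ≤ t.length →
    ((SatO t r i ∧ Sat t χ.toLTL i) ↔ ∃ d ∈ l, Sat t d.toLTL i)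

lemma good_comm {φ ψ : DLTL P} {l : List (DLTL P)} (h : Good φ ψ l) : Good ψ φ l :=
  ⟨h.1, fun t i hi => (and_comm).trans (h.2 t i hi)⟩

lemma mergeO {N : ℕ}
    (ih : ∀ φ' ψ' : DLTL P, dSz φ' + dSz ψ' ≤ N → ∃ l, Good φ' ψ' l)
    (r : Option (DLTL P)) (χ : DLTL P) (h : dSzO r + dSz χ ≤ N) :
    ∃ l, GoodO r χ l := by
  cases r with
  | none =>
    refine ⟨[χ], by simp, ?_⟩
    intro t i hi
    simp [SatO]
  | some φ' =>
    obtain ⟨l, hl⟩ := ih φ' χ h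
    exact ⟨l, hl.1, hl.2⟩

end Aux
section Cases

variable {P : Type}

lemma caseRR {N : ℕ}
    (ih : ∀ φ' ψ' : DLTL P, dSz φ' + dSz ψ' ≤ N → ∃ l, Good φ' ψ' l)
    (n m : ℕ) (s u : PSym P) (r₁ r₂ : Option (DLTL P)) (hnm : n ≤ m)
    (hsz : dSzO r₁ + (dSzO r₂ + 1) ≤ N) :
    ∃ l, Good (dMk false n s r₁) (dMk false m u r₂) l := by
  obtain ⟨l, hne, hl⟩ := mergeO ih r₁ (dMk false (m - n) u r₂) (by rw [dSz_dMk]; omega)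
  refine ⟨l.map (fun c => dMk false n s (some c)), by simpa using hne, ?_⟩
  intro t i hi
  rw [sat_dmk_false t n s r₁ i hi, sat_dmk_false t m u r₂ i hi]
  constructor
  · rintro ⟨⟨h1, h2, h3⟩, ⟨h4, h5, h6⟩⟩
    have hsat : SatO t r₁ (i + n) ∧ Sat t (dMk false (m - n) u r₂).toLTL (i + n) := by
      refine ⟨h3, (sat_dmk_false t (m - n) u r₂ (i + n) h1).mpr ?_⟩
      have e : i + n + (m - n) = i + m := by omega
      rw [e]; exact ⟨h4, h5, h6⟩
    obtain ⟨c, hc, hcs⟩ := (hl t (i + n) h1).mp hsat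
    refine ⟨dMk false n s (some c), List.mem_map_of_mem hc, ?_⟩
    rw [sat_dmk_false t n s (some c) i hi]
    exact ⟨h1, h2, hcs⟩
  · rintro ⟨d, hd, hdsat⟩
    obtain ⟨c, hc, rfl⟩ := List.mem_map.mp hd
    rw [sat_dmk_false t n s (some c) i hi] at hdsat
    obtain ⟨hin, h2, h3⟩ := hdsat
    obtain ⟨h3', hrest⟩ := (hl t (i + n) hin).mpr ⟨c, hc, h3⟩
    rw [sat_dmk_false t (m - n) u r₂ (i + n) hin] at hrest
    have e : i + n + (m - n) = i + m := by omega
    rw [e] at hrest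
    exact ⟨⟨hin, h2, h3'⟩, hrest⟩

lemma caseRF {N : ℕ}
    (ih : ∀ φ' ψ' : DLTL P, dSz φ' + dSz ψ' ≤ N → ∃ l, Good φ' ψ' l)
    (n m : ℕ) (s u : PSym P) (r₁ r₂ : Option (DLTL P))
    (h1 : dSzO r₁ + (dSzO r₂ + 1) ≤ N)
    (h2 : dSzO r₂ + (dSzO r₁ + 1) ≤ N) :
    ∃ l, Good (dMk false n s r₁) (dMk true m u r₂) l := by
  obtain ⟨lA, hAne, hA⟩ := mergeO ih r₁ (dMk true (m - n) u r₂) (by rw [dSz_dMk]; omega)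
  have hB : ∀ d : ℕ, ∃ l, GoodO r₂ (dMk false (n - d) s r₁) l := fun d =>
    mergeO ih r₂ _ (by rw [dSz_dMk]; omega)
  choose fB hfB using hB
  refine ⟨lA.map (fun c => dMk false n s (some c)) ++
      (List.range' m (n - m)).flatMap
        (fun d => (fB d).map (fun c => dMk false d u (some c))), by simp [hAne], ?_⟩
  intro t i hi
  rw [sat_dmk_false t n s r₁ i hi, sat_dmk_true t m u r₂ i]
  constructor
  · rintro ⟨⟨hn1, hn2, hn3⟩, ⟨q, hq1, hq2, hq3, hq4⟩⟩
    by_cases hq : i + n ≤ q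
    · have hsat : SatO t r₁ (i + n) ∧ Sat t (dMk true (m - n) u r₂).toLTL (i + n) :=
        ⟨hn3, (sat_dmk_true t (m - n) u r₂ (i + n)).mpr ⟨q, by omega, hq2, hq3, hq4⟩⟩
      obtain ⟨c, hc, hcs⟩ := (hA t (i + n) hn1).mp hsat
      refine ⟨dMk false n s (some c), List.mem_append_left _ (List.mem_map_of_mem hc), ?_⟩
      rw [sat_dmk_false t n s (some c) i hi]
      exact ⟨hn1, hn2, hcs⟩
    · set d := q - i with hdd
      have hqe : q = i + d := by omega
      have hidl : i + d ≤ t.length := by omega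
      have hsat : SatO t r₂ (i + d) ∧ Sat t (dMk false (n - d) s r₁).toLTL (i + d) := by
        constructor
        · rw [← hqe]; exact hq4
        · refine (sat_dmk_false t (n - d) s r₁ (i + d) hidl).mpr ?_
          have e : i + d + (n - d) = i + n := by omega
          rw [e]; exact ⟨hn1, hn2, hn3⟩
      obtain ⟨c, hc, hcs⟩ := ((hfB d).2 t (i + d) hidl).mp hsat
      refine ⟨dMk false d u (some c), ?_, ?_⟩
      · refine List.mem_append_right _ (List.mem_flatMap.mpr ⟨d, ?_, List.mem_map_of_mem hc⟩)
        rw [List.mem_range'_1]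
        omega
      · rw [sat_dmk_false t d u (some c) i hi]
        refine ⟨hidl, ?_, hcs⟩
        rw [← hqe]; exact hq3
  · rintro ⟨x, hx, hxs⟩
    rcases List.mem_append.mp hx with hx | hx
    · obtain ⟨c, hc, rfl⟩ := List.mem_map.mp hx
      rw [sat_dmk_false t n s (some c) i hi] at hxs
      obtain ⟨hin, hs2, hs3⟩ := hxs
      obtain ⟨hr1, hrest⟩ := (hA t (i + n) hin).mpr ⟨c, hc, hs3⟩
      rw [sat_dmk_true t (m - n) u r₂ (i + n)] at hrest
      obtain ⟨q, hq1, hq2, hq3, hq4⟩ := hrest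
      exact ⟨⟨hin, hs2, hr1⟩, ⟨q, by omega, hq2, hq3, hq4⟩⟩
    · obtain ⟨d, hdmem, hx2⟩ := List.mem_flatMap.mp hx
      obtain ⟨c, hc, rfl⟩ := List.mem_map.mp hx2
      rw [List.mem_range'_1] at hdmem
      rw [sat_dmk_false t d u (some c) i hi] at hxs
      obtain ⟨hidl, hu, hcs⟩ := hxs
      obtain ⟨hr2, hrest⟩ := ((hfB d).2 t (i + d) hidl).mpr ⟨c, hc, hcs⟩
      rw [sat_dmk_false t (n - d) s r₁ (i + d) hidl] at hrest
      have e : i + d + (n - d) = i + n := by omega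
      rw [e] at hrest
      exact ⟨⟨hrest.1, hrest.2.1, hrest.2.2⟩, ⟨i + d, by omega, hidl, hu, hr2⟩⟩

lemma caseFF {N : ℕ}
    (ih : ∀ φ' ψ' : DLTL P, dSz φ' + dSz ψ' ≤ N → ∃ l, Good φ' ψ' l)
    (n m : ℕ) (s u : PSym P) (r₁ r₂ : Option (DLTL P))
    (h1 : dSzO r₁ + (dSzO r₂ + 1) ≤ N)
    (h2 : dSzO r₂ + (dSzO r₁ + 1) ≤ N) :
    ∃ l, Good (dMk true n s r₁) (dMk true m u r₂) l := by
  obtain ⟨lA, hAne, hA⟩ := mergeO ih r₁ (dMk true 0 u r₂) (by rw [dSz_dMk]; omega)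
  obtain ⟨lB, hBne, hB⟩ := mergeO ih r₂ (dMk true 0 s r₁) (by rw [dSz_dMk]; omega)
  have hC : ∀ e : ℕ, ∃ l, GoodO r₁ (dMk true (m - e) u r₂) l := fun e =>
    mergeO ih r₁ _ (by rw [dSz_dMk]; omega)
  choose fC hfC using hC
  have hD : ∀ f : ℕ, ∃ l, GoodO r₂ (dMk true (n - f) s r₁) l := fun f =>
    mergeO ih r₂ _ (by rw [dSz_dMk]; omega)
  choose fD hfD using hD
  refine ⟨lA.map (fun c => dMk true (max n m) s (some c)) ++
      lB.map (fun c => dMk true (max n m) u (some c)) ++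
      (List.range' n (m - n)).flatMap
        (fun e => (fC e).map (fun c => dMk false e s (some c))) ++
      (List.range' m (n - m)).flatMap
        (fun f => (fD f).map (fun c => dMk false f u (some c))), by simp [hAne], ?_⟩
  intro t i hi
  rw [sat_dmk_true t n s r₁ i, sat_dmk_true t m u r₂ i]
  constructor
  · rintro ⟨⟨p, hp1, hp2, hp3, hp4⟩, ⟨q, hq1, hq2, hq3, hq4⟩⟩
    by_cases hpq : p ≤ q
    · by_cases hpm : i + m ≤ p
      · -- family A
        have hsat : SatO t r₁ p ∧ Sat t (dMk true 0 u r₂).toLTL p :=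
          ⟨hp4, (sat_dmk_true t 0 u r₂ p).mpr ⟨q, by omega, hq2, hq3, hq4⟩⟩
        obtain ⟨c, hc, hcs⟩ := (hA t p hp2).mp hsat
        refine ⟨dMk true (max n m) s (some c), ?_, ?_⟩
        · simp only [List.mem_append]
          exact Or.inl (Or.inl (Or.inl (List.mem_map_of_mem hc)))
        · rw [sat_dmk_true t (max n m) s (some c) i]
          exact ⟨p, by omega, hp2, hp3, hcs⟩
      · -- family C, e := p - i
        set e := p - i with hee
        have hpe : p = i + e := by omega
        have hsat : SatO t r₁ p ∧ Sat t (dMk true (m - e) u r₂).toLTL p :=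
          ⟨hp4, (sat_dmk_true t (m - e) u r₂ p).mpr ⟨q, by omega, hq2, hq3, hq4⟩⟩
        obtain ⟨c, hc, hcs⟩ := ((hfC e).2 t p hp2).mp hsat
        refine ⟨dMk false e s (some c), ?_, ?_⟩
        · simp only [List.mem_append]
          refine Or.inl (Or.inr (List.mem_flatMap.mpr ⟨e, ?_, List.mem_map_of_mem hc⟩))
          rw [List.mem_range'_1]
          omega
        · rw [sat_dmk_false t e s (some c) i hi, ← hpe]
          exact ⟨hp2, hp3, hcs⟩
    · by_cases hqn : i + n ≤ q
      · -- family B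
        have hsat : SatO t r₂ q ∧ Sat t (dMk true 0 s r₁).toLTL q :=
          ⟨hq4, (sat_dmk_true t 0 s r₁ q).mpr ⟨p, by omega, hp2, hp3, hp4⟩⟩
        obtain ⟨c, hc, hcs⟩ := (hB t q hq2).mp hsat
        refine ⟨dMk true (max n m) u (some c), ?_, ?_⟩
        · simp only [List.mem_append]
          exact Or.inl (Or.inl (Or.inr (List.mem_map_of_mem hc)))
        · rw [sat_dmk_true t (max n m) u (some c) i]
          exact ⟨q, by omega, hq2, hq3, hcs⟩
      · -- family D, f := q - i
        set f := q - i with hff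
        have hqe : q = i + f := by omega
        have hsat : SatO t r₂ q ∧ Sat t (dMk true (n - f) s r₁).toLTL q :=
          ⟨hq4, (sat_dmk_true t (n - f) s r₁ q).mpr ⟨p, by omega, hp2, hp3, hp4⟩⟩
        obtain ⟨c, hc, hcs⟩ := ((hfD f).2 t q hq2).mp hsat
        refine ⟨dMk false f u (some c), ?_, ?_⟩
        · simp only [List.mem_append]
          refine Or.inr (List.mem_flatMap.mpr ⟨f, ?_, List.mem_map_of_mem hc⟩)
          rw [List.mem_range'_1]
          omega
        · rw [sat_dmk_false t f u (some c) i hi, ← hqe]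
          exact ⟨hq2, hq3, hcs⟩
  · rintro ⟨x, hx, hxs⟩
    rcases List.mem_append.mp hx with hx | hx
    rcases List.mem_append.mp hx with hx | hx
    rcases List.mem_append.mp hx with hx | hx
    · -- family A
      obtain ⟨c, hc, rfl⟩ := List.mem_map.mp hx
      rw [sat_dmk_true t (max n m) s (some c) i] at hxs
      obtain ⟨p, hp1, hp2, hp3, hp4⟩ := hxs
      obtain ⟨hr1, hrest⟩ := (hA t p hp2).mpr ⟨c, hc, hp4⟩
      rw [sat_dmk_true t 0 u r₂ p] at hrest
      obtain ⟨q, hq1, hq2, hq3, hq4⟩ := hrest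
      exact ⟨⟨p, by omega, hp2, hp3, hr1⟩, ⟨q, by omega, hq2, hq3, hq4⟩⟩
    · -- family B
      obtain ⟨c, hc, rfl⟩ := List.mem_map.mp hx
      rw [sat_dmk_true t (max n m) u (some c) i] at hxs
      obtain ⟨q, hq1, hq2, hq3, hq4⟩ := hxs
      obtain ⟨hr2, hrest⟩ := (hB t q hq2).mpr ⟨c, hc, hq4⟩
      rw [sat_dmk_true t 0 s r₁ q] at hrest
      obtain ⟨p, hp1, hp2, hp3, hp4⟩ := hrest
      exact ⟨⟨p, by omega, hp2, hp3, hp4⟩, ⟨q, by omega, hq2, hq3, hr2⟩⟩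
    · -- family C
      obtain ⟨e, hemem, hx2⟩ := List.mem_flatMap.mp hx
      obtain ⟨c, hc, rfl⟩ := List.mem_map.mp hx2
      rw [List.mem_range'_1] at hemem
      rw [sat_dmk_false t e s (some c) i hi] at hxs
      obtain ⟨hie, hs3, hcs⟩ := hxs
      obtain ⟨hr1, hrest⟩ := ((hfC e).2 t (i + e) hie).mpr ⟨c, hc, hcs⟩
      rw [sat_dmk_true t (m - e) u r₂ (i + e)] at hrest
      obtain ⟨q, hq1, hq2, hq3, hq4⟩ := hrest
      exact ⟨⟨i + e, by omega, hie, hs3, hr1⟩, ⟨q, by omega, hq2, hq3, hq4⟩⟩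
    · -- family D
      obtain ⟨f, hfmem, hx2⟩ := List.mem_flatMap.mp hx
      obtain ⟨c, hc, rfl⟩ := List.mem_map.mp hx2
      rw [List.mem_range'_1] at hfmem
      rw [sat_dmk_false t f u (some c) i hi] at hxs
      obtain ⟨hif, hu3, hcs⟩ := hxs
      obtain ⟨hr2, hrest⟩ := ((hfD f).2 t (i + f) hif).mpr ⟨c, hc, hcs⟩
      rw [sat_dmk_true t (n - f) s r₁ (i + f)] at hrest
      obtain ⟨p, hp1, hp2, hp3, hp4⟩ := hrest
      exact ⟨⟨p, by omega, hp2, hp3, hp4⟩, ⟨i + f, by omega, hif, hu3, hr2⟩⟩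

end Cases
lemma dltl_main {P : Type} :
    ∀ (N : ℕ) (φ ψ : DLTL P), dSz φ + dSz ψ ≤ N → ∃ l, Good φ ψ l := by
  intro N
  induction N with
  | zero =>
    intro φ ψ h
    have := dSz_pos φ
    have := dSz_pos ψ
    omega
  | succ N ih =>
    intro φ ψ h
    have key : ∀ (b₁ b₂ : Bool) (n m : ℕ) (s u : PSym P) (r₁ r₂ : Option (DLTL P)),
        (dSzO r₁ + 1) + (dSzO r₂ + 1) ≤ N + 1 →
        ∃ l, Good (dMk b₁ n s r₁) (dMk b₂ m u r₂) l := by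
      intro b₁ b₂ n m s u r₁ r₂ hsz
      match b₁, b₂ with
      | false, false =>
        rcases le_total n m with hnm | hnm
        · exact caseRR ih n m s u r₁ r₂ hnm (by omega)
        · obtain ⟨l, hl⟩ := caseRR ih m n u s r₂ r₁ hnm (by omega)
          exact ⟨l, good_comm hl⟩
      | false, true => exact caseRF ih n m s u r₁ r₂ (by omega) (by omega)
      | true, false =>
        obtain ⟨l, hl⟩ := caseRF ih m n u s r₂ r₁ (by omega) (by omega)
        exact ⟨l, good_comm hl⟩
      | true, true => exact caseFF ih n m s u r₁ r₂ (by omega) (by omega)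
    have e1 := dMk_eta φ
    have e2 := dMk_eta ψ
    rw [← e1, ← e2]
    refine key _ _ _ _ _ _ _ _ ?_
    have s1 := dSz_eq φ
    have s2 := dSz_eq ψ
    omega
theorem dltl_and_eq_disjunction {P : Type} (φ ψ : DLTL P) :
    ∃ l : List (DLTL P), l ≠ [] ∧
      ∀ (t : List (Set P)) (i : ℕ), 1 ≤ i → i ≤ t.length →
        ((Sat t φ.toLTL i ∧ Sat t ψ.toLTL i) ↔ ∃ d ∈ l, Sat t d.toLTL i) := by
  obtain ⟨l, hne, hl⟩ := dltl_main (dSz φ + dSz ψ) φ ψ le_rfl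
  exact ⟨l, hne, fun t i _ hi => hl t i hi⟩
end

section
/- Every formula of the fragment LTL(F, X, ∧, ∨) is semantically equivalent over finite traces to a positive Boolean combination (using ∧ and ∨) of directed LTL formulas. -/
/-- Positive Boolean combinations of directed LTL formulas. -/
inductive PBC (P : Type) : Type
  | base : DLTL P → PBC P
  | and  : PBC P → PBC P → PBC P
  | or   : PBC P → PBC P → PBC P

/-- Semantics of positive Boolean combinations of directed formulas. -/
def PBC.sat {P : Type} (t : List (Set P)) : PBC P → ℕ → Prop
  | .base d, i => Sat t d.toLTL i
  | .and a b, i => PBC.sat t a i ∧ PBC.sat t b i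
  | .or a b, i => PBC.sat t a i ∨ PBC.sat t b i

/-- The fragment LTL(F, X, ∧, ∨): formulas built from literals using
F, X, conjunction and disjunction. -/
def IsFX {P : Type} : LTL P → Prop
  | .atom _ => True
  | .natom _ => True
  | .and φ ψ => IsFX φ ∧ IsFX ψ
  | .or φ ψ => IsFX φ ∧ IsFX ψ
  | .next φ => IsFX φ
  | .fin φ => IsFX φ
  | _ => False

namespace DirProof
open LTL

variable {P : Type}

/-- n-fold next, semantics. -/
theorem sat_iterX (t : List (Set P)) (ψ : LTL P) :
    ∀ n i, Sat t (iterX n ψ) i ↔ ((n = 0 ∨ i + n ≤ t.length) ∧ Sat t ψ (i + n)) := by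
  intro n
  induction n with
  | zero => intro i; simp [iterX]
  | succ n ih =>
    intro i
    show (i < t.length ∧ Sat t (iterX n ψ) (i+1)) ↔ _
    rw [ih]
    constructor
    · rintro ⟨h1, h2, h3⟩
      have hlen : i + (n + 1) ≤ t.length := by
        rcases h2 with h | h
        · omega
        · omega
      exact ⟨Or.inr hlen, by rwa [show i + 1 + n = i + (n+1) from by omega] at h3⟩
    · rintro ⟨h1, h2⟩
      have hlen : i + (n + 1) ≤ t.length := by
        rcases h1 with h | h
        · omega
        · omega
      exact ⟨by omega, Or.inr (by omega), by rwa [show i + (n+1) = i + 1 + n from by omega] at h2⟩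

theorem sat_finX (t : List (Set P)) (ψ : LTL P) (n i : ℕ) :
    Sat t (.fin (iterX n ψ)) i ↔ ∃ k, i + n ≤ k ∧ k ≤ t.length ∧ Sat t ψ k := by
  show (∃ j, i ≤ j ∧ j ≤ t.length ∧ Sat t (iterX n ψ) j) ↔ _
  constructor
  · rintro ⟨j, hij, hjl, hs⟩
    rw [sat_iterX] at hs
    obtain ⟨hg, hs⟩ := hs
    refine ⟨j + n, by omega, ?_, hs⟩
    rcases hg with h | h
    · omega
    · omega
  · rintro ⟨k, hik, hkl, hs⟩
    refine ⟨k - n, by omega, by omega, ?_⟩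
    rw [sat_iterX]
    exact ⟨Or.inr (by omega), by rwa [show k = k - n + n from by omega] at hs⟩

/-- Satisfaction of the foldl of conjunctions of literals. -/
theorem sat_foldl (t : List (Set P)) (i : ℕ) :
    ∀ (l : List (Lit P)) (a : LTL P),
      Sat t (l.foldl (fun a x => .and a x.toLTL) a) i ↔
        (Sat t a i ∧ ∀ x ∈ l, Sat t x.toLTL i) := by
  intro l
  induction l with
  | nil => intro a; simp
  | cons x l ih =>
    intro a
    rw [List.foldl_cons, ih]
    show (Sat t a i ∧ Sat t x.toLTL i) ∧ _ ↔ _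
    simp only [List.mem_cons]
    constructor
    · rintro ⟨⟨h1, h2⟩, h3⟩
      exact ⟨h1, by rintro y (rfl | hy); exact h2; exact h3 y hy⟩
    · rintro ⟨h1, h2⟩
      exact ⟨⟨h1, h2 x (Or.inl rfl)⟩, fun y hy => h2 y (Or.inr hy)⟩

/-- Merge of two partial symbols. -/
def PSym.merge (s₁ s₂ : PSym P) : PSym P := ⟨s₁.head, s₁.tail ++ s₂.head :: s₂.tail⟩

theorem sat_psym_merge (t : List (Set P)) (i : ℕ) (s₁ s₂ : PSym P) :
    Sat t (PSym.merge s₁ s₂).toLTL i ↔ (Sat t s₁.toLTL i ∧ Sat t s₂.toLTL i) := by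
  simp only [PSym.merge, PSym.toLTL, sat_foldl, List.mem_append, List.mem_cons]
  constructor
  · rintro ⟨h1, h2⟩
    exact ⟨⟨h1, fun x hx => h2 x (Or.inl hx)⟩,
      ⟨h2 _ (Or.inr (Or.inl rfl)), fun x hx => h2 x (Or.inr (Or.inr hx))⟩⟩
  · rintro ⟨⟨h1, h2⟩, h3, h4⟩
    refine ⟨h1, ?_⟩
    rintro x (hx | rfl | hx)
    · exact h2 x hx
    · exact h3
    · exact h4 x hx

end DirProof
variable {P : Type}

def DLTL.isF : DLTL P → Bool
  | .xs _ _ => false | .xcons _ _ _ => false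
  | .fxs _ _ => true | .fxcons _ _ _ => true

def DLTL.lead : DLTL P → ℕ
  | .xs n _ => n | .xcons n _ _ => n | .fxs n _ => n | .fxcons n _ _ => n

def DLTL.sym : DLTL P → PSym P
  | .xs _ s => s | .xcons _ s _ => s | .fxs _ s => s | .fxcons _ s _ => s

def DLTL.rest : DLTL P → Option (DLTL P)
  | .xs _ _ => none | .fxs _ _ => none
  | .xcons _ _ a => some a | .fxcons _ _ a => some a

def DLTL.size : DLTL P → ℕ
  | .xs _ _ => 1 | .fxs _ _ => 2
  | .xcons _ _ a => 1 + DLTL.size a | .fxcons _ _ a => 2 + DLTL.size a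

def mkD (f : Bool) (n : ℕ) (s : PSym P) (r : Option (DLTL P)) : DLTL P :=
  match f, r with
  | false, none => .xs n s
  | false, some a => .xcons n s a
  | true, none => .fxs n s
  | true, some a => .fxcons n s a

namespace DirProof
variable {P : Type}
@[simp] theorem mkD_eta (d : DLTL P) : mkD d.isF d.lead d.sym d.rest = d := by
  cases d <;> rfl

def sizeR : Option (DLTL P) → ℕ
  | none => 0
  | some a => a.size

@[simp] theorem size_mkD (f : Bool) (n : ℕ) (s : PSym P) (r : Option (DLTL P)) :
    (mkD f n s r).size = (bif f then 2 else 1) + sizeR r := by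
  cases f <;> cases r <;> rfl

theorem size_eq (d : DLTL P) : d.size = (bif d.isF then 2 else 1) + sizeR d.rest := by
  cases d <;> rfl

theorem size_pos (d : DLTL P) : 1 ≤ d.size := by
  cases d <;> simp [DLTL.size] <;> omega

/-- The "body": satisfaction of the partial symbol together with the optional rest. -/
def BodyS (t : List (Set P)) (s : PSym P) (r : Option (DLTL P)) (k : ℕ) : Prop :=
  Sat t s.toLTL k ∧ (match r with | none => True | some a => Sat t a.toLTL k)

theorem sat_mkD_false (t : List (Set P)) (n : ℕ) (s : PSym P) (r : Option (DLTL P)) (i : ℕ) :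
    Sat t (mkD false n s r).toLTL i ↔ ((n = 0 ∨ i + n ≤ t.length) ∧ BodyS t s r (i + n)) := by
  cases r with
  | none =>
    show Sat t (iterX n s.toLTL) i ↔ _
    rw [sat_iterX]
    simp [BodyS]
  | some a =>
    show Sat t (iterX n (.and s.toLTL a.toLTL)) i ↔ _
    rw [sat_iterX]
    rfl

theorem sat_mkD_true (t : List (Set P)) (n : ℕ) (s : PSym P) (r : Option (DLTL P)) (i : ℕ) :
    Sat t (mkD true n s r).toLTL i ↔ (∃ k, i + n ≤ k ∧ k ≤ t.length ∧ BodyS t s r k) := by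
  cases r with
  | none =>
    show Sat t (.fin (iterX n s.toLTL)) i ↔ _
    rw [sat_finX]
    simp [BodyS]
  | some a =>
    show Sat t (.fin (iterX n (.and s.toLTL a.toLTL))) i ↔ _
    rw [sat_finX]
    rfl

@[simp] theorem isF_mkD (f : Bool) (n : ℕ) (s : PSym P) (r : Option (DLTL P)) :
    (mkD f n s r).isF = f := by cases f <;> cases r <;> rfl
@[simp] theorem lead_mkD (f : Bool) (n : ℕ) (s : PSym P) (r : Option (DLTL P)) :
    (mkD f n s r).lead = n := by cases f <;> cases r <;> rfl
@[simp] theorem sym_mkD (f : Bool) (n : ℕ) (s : PSym P) (r : Option (DLTL P)) :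
    (mkD f n s r).sym = s := by cases f <;> cases r <;> rfl
@[simp] theorem rest_mkD (f : Bool) (n : ℕ) (s : PSym P) (r : Option (DLTL P)) :
    (mkD f n s r).rest = r := by cases f <;> cases r <;> rfl

theorem exists_mkD (d : DLTL P) : ∃ f n s r, d = mkD f n s r :=
  ⟨d.isF, d.lead, d.sym, d.rest, (mkD_eta d).symm⟩

/-- Prefix a directed formula with F (absorbing an existing F). -/
def addF (d : DLTL P) : DLTL P := mkD true d.lead d.sym d.rest

@[simp] theorem addF_mkD (f : Bool) (n : ℕ) (s : PSym P) (r : Option (DLTL P)) :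
    addF (mkD f n s r) = mkD true n s r := by simp [addF]

theorem sat_addF (t : List (Set P)) (d : DLTL P) (i : ℕ) (hi : i ≤ t.length) :
    Sat t (addF d).toLTL i ↔ ∃ j, i ≤ j ∧ j ≤ t.length ∧ Sat t d.toLTL j := by
  obtain ⟨f, n, s, r, rfl⟩ := exists_mkD d
  rw [addF_mkD, sat_mkD_true]
  cases f
  · constructor
    · rintro ⟨k, hk1, hk2, hb⟩
      refine ⟨k - n, by omega, by omega, ?_⟩
      rw [sat_mkD_false]
      exact ⟨Or.inr (by omega), by rwa [show k - n + n = k from by omega]⟩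
    · rintro ⟨j, hj1, hj2, hs⟩
      rw [sat_mkD_false] at hs
      obtain ⟨hg, hb⟩ := hs
      exact ⟨j + n, by omega, by rcases hg with h | h <;> omega, hb⟩
  · constructor
    · rintro ⟨k, hk1, hk2, hb⟩
      refine ⟨i, le_refl _, hi, ?_⟩
      rw [sat_mkD_true]
      exact ⟨k, hk1, hk2, hb⟩
    · rintro ⟨j, hj1, hj2, hs⟩
      rw [sat_mkD_true] at hs
      obtain ⟨k, hk1, hk2, hb⟩ := hs
      exact ⟨k, by omega, hk2, hb⟩

/-- Prefix with X. -/
def nextD (d : DLTL P) : DLTL P := mkD d.isF (d.lead + 1) d.sym d.rest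

theorem sat_nextD (t : List (Set P)) (d : DLTL P) (i : ℕ) :
    Sat t (nextD d).toLTL i ↔ (i < t.length ∧ Sat t d.toLTL (i + 1)) := by
  obtain ⟨f, n, s, r, rfl⟩ := exists_mkD d
  rw [show nextD (mkD f n s r) = mkD f (n+1) s r by simp [nextD]]
  cases f
  · rw [sat_mkD_false, sat_mkD_false]
    constructor
    · rintro ⟨hg, hb⟩
      have : i + (n + 1) ≤ t.length := by rcases hg with h | h <;> omega
      exact ⟨by omega, Or.inr (by omega),
        by rwa [show i + 1 + n = i + (n + 1) from by omega]⟩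
    · rintro ⟨h1, hg, hb⟩
      have : i + 1 + n ≤ t.length := by rcases hg with h | h <;> omega
      exact ⟨Or.inr (by omega),
        by rwa [show i + (n + 1) = i + 1 + n from by omega]⟩
  · rw [sat_mkD_true, sat_mkD_true]
    constructor
    · rintro ⟨k, hk1, hk2, hb⟩
      exact ⟨by omega, k, by omega, hk2, hb⟩
    · rintro ⟨h1, k, hk1, hk2, hb⟩
      exact ⟨k, by omega, hk2, hb⟩

end DirProof
namespace DirProof
variable {P : Type}

/-- Fueled merge of two directed formulas: a list of directed formulas whose
disjunction is equivalent to the conjunction of the two inputs. -/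
def mergeF : ℕ → DLTL P → DLTL P → List (DLTL P)
  | 0, _, _ => []
  | fuel+1, d₁, d₂ =>
    match d₁.isF, d₂.isF with
    | false, false =>
      if d₁.lead = d₂.lead then
        match d₁.rest, d₂.rest with
        | none, r => [mkD false d₁.lead (PSym.merge d₁.sym d₂.sym) r]
        | some a, none => [mkD false d₁.lead (PSym.merge d₁.sym d₂.sym) (some a)]
        | some a, some b =>
          (mergeF fuel a b).map (fun c => mkD false d₁.lead (PSym.merge d₁.sym d₂.sym) (some c))
      else if d₁.lead < d₂.lead then
        match d₁.rest with
        | none => [mkD false d₁.lead d₁.sym (some (mkD false (d₂.lead - d₁.lead) d₂.sym d₂.rest))]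
        | some a => (mergeF fuel a (mkD false (d₂.lead - d₁.lead) d₂.sym d₂.rest)).map
            (fun c => mkD false d₁.lead d₁.sym (some c))
      else
        match d₂.rest with
        | none => [mkD false d₂.lead d₂.sym (some (mkD false (d₁.lead - d₂.lead) d₁.sym d₁.rest))]
        | some a => (mergeF fuel a (mkD false (d₁.lead - d₂.lead) d₁.sym d₁.rest)).map
            (fun c => mkD false d₂.lead d₂.sym (some c))
    | false, true =>
      (match d₁.rest with
       | none => [mkD false d₁.lead d₁.sym (some (mkD true (d₂.lead - d₁.lead) d₂.sym d₂.rest))]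
       | some a => (mergeF fuel a (mkD true (d₂.lead - d₁.lead) d₂.sym d₂.rest)).map
           (fun c => mkD false d₁.lead d₁.sym (some c)))
      ++ (List.range' d₂.lead (d₁.lead - d₂.lead)).flatMap
           (fun m => mergeF fuel (mkD false m d₂.sym d₂.rest) d₁)
    | true, false =>
      (match d₂.rest with
       | none => [mkD false d₂.lead d₂.sym (some (mkD true (d₁.lead - d₂.lead) d₁.sym d₁.rest))]
       | some a => (mergeF fuel a (mkD true (d₁.lead - d₂.lead) d₁.sym d₁.rest)).map
           (fun c => mkD false d₂.lead d₂.sym (some c)))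
      ++ (List.range' d₁.lead (d₂.lead - d₁.lead)).flatMap
           (fun m => mergeF fuel (mkD false m d₁.sym d₁.rest) d₂)
    | true, true =>
      ((mergeF fuel (mkD false d₁.lead d₁.sym d₁.rest) d₂)
        ++ (mergeF fuel (mkD false d₂.lead d₂.sym d₂.rest) d₁)).map addF

end DirProof
namespace DirProof
variable {P : Type}

theorem ex_map {α β : Type} (g : α → β) (l : List α) (Q : β → Prop) :
    (∃ c ∈ l.map g, Q c) ↔ ∃ x ∈ l, Q (g x) := by simp

theorem ex_singleton {α : Type} (x : α) (Q : α → Prop) : (∃ c ∈ [x], Q c) ↔ Q x := by simp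

theorem ex_append {α : Type} (l₁ l₂ : List α) (Q : α → Prop) :
    (∃ c ∈ l₁ ++ l₂, Q c) ↔ (∃ c ∈ l₁, Q c) ∨ (∃ c ∈ l₂, Q c) := by
  simp [or_and_right, exists_or]

theorem ex_flatMap {α β : Type} (l : List α) (g : α → List β) (Q : β → Prop) :
    (∃ c ∈ l.flatMap g, Q c) ↔ ∃ x ∈ l, ∃ c ∈ g x, Q c := by
  simp only [List.mem_flatMap]
  constructor
  · rintro ⟨c, ⟨x, hx, hc⟩, hq⟩; exact ⟨x, hx, c, hc, hq⟩
  · rintro ⟨x, hx, c, hc, hq⟩; exact ⟨c, ⟨x, hx, hc⟩, hq⟩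

@[simp] theorem BodyS_none (t : List (Set P)) (s : PSym P) (k : ℕ) :
    BodyS t s none k ↔ Sat t s.toLTL k := by simp [BodyS]

theorem BodyS_some (t : List (Set P)) (s : PSym P) (a : DLTL P) (k : ℕ) :
    BodyS t s (some a) k ↔ (Sat t s.toLTL k ∧ Sat t a.toLTL k) := Iff.rfl

@[simp] theorem sizeR_none : sizeR (none : Option (DLTL P)) = 0 := rfl
@[simp] theorem sizeR_some (a : DLTL P) : sizeR (some a) = a.size := rfl

theorem mergeF_correct (t : List (Set P)) :
    ∀ fuel, ∀ d₁ d₂ : DLTL P, d₁.size + d₂.size ≤ fuel → ∀ i, i ≤ t.length →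
      ((Sat t d₁.toLTL i ∧ Sat t d₂.toLTL i) ↔
        ∃ c ∈ mergeF fuel d₁ d₂, Sat t c.toLTL i) := by
  intro fuel
  induction fuel with
  | zero =>
    intro d₁ d₂ h
    have h1 := size_pos d₁
    have h2 := size_pos d₂
    omega
  | succ fuel ih =>
    intro d₁ d₂ hsz i hi
    obtain ⟨f₁, n₁, s₁, r₁, rfl⟩ := exists_mkD d₁
    obtain ⟨f₂, n₂, s₂, r₂, rfl⟩ := exists_mkD d₂
    rw [size_mkD, size_mkD] at hsz
    rcases f₁ with _ | _ <;> rcases f₂ with _ | _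
    -- Case false/false --------------------------------------------------
    · simp only [mergeF, isF_mkD, lead_mkD, sym_mkD, rest_mkD]
      rw [sat_mkD_false, sat_mkD_false]
      by_cases hnn : n₁ = n₂
      · subst hnn
        rw [if_pos rfl]
        rcases r₁ with _ | a
        · rw [ex_singleton, sat_mkD_false]
          cases r₂ with
          | none =>
            simp only [BodyS_none, BodyS_some, sat_psym_merge]
            tauto
          | some b =>
            simp only [BodyS_none, BodyS_some, sat_psym_merge]
            tauto
        · rcases r₂ with _ | b
          · rw [ex_singleton, sat_mkD_false]
            simp only [BodyS_none, BodyS_some, sat_psym_merge]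
            tauto
          · rw [ex_map]
            have hIH : ∀ k, k ≤ t.length →
                ((Sat t a.toLTL k ∧ Sat t b.toLTL k) ↔ ∃ c ∈ mergeF fuel a b, Sat t c.toLTL k) :=
              fun k hk => ih a b (by simp at hsz; omega) k hk
            constructor
            · rintro ⟨⟨hg, hs1, ha⟩, ⟨-, hs2, hb⟩⟩
              have hk : i + n₁ ≤ t.length := by rcases hg with h | h <;> omega
              obtain ⟨x, hx, hsx⟩ := (hIH (i + n₁) hk).mp ⟨ha, hb⟩
              refine ⟨x, hx, ?_⟩
              rw [sat_mkD_false]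
              exact ⟨hg, (sat_psym_merge t _ s₁ s₂).mpr ⟨hs1, hs2⟩, hsx⟩
            · rintro ⟨x, hx, hsx⟩
              rw [sat_mkD_false] at hsx
              obtain ⟨hg, hm, hx'⟩ := hsx
              have hk : i + n₁ ≤ t.length := by rcases hg with h | h <;> omega
              obtain ⟨hs1, hs2⟩ := (sat_psym_merge t _ s₁ s₂).mp hm
              obtain ⟨ha, hb⟩ := (hIH (i + n₁) hk).mpr ⟨x, hx, hx'⟩
              exact ⟨⟨hg, hs1, ha⟩, ⟨hg, hs2, hb⟩⟩
      · rw [if_neg hnn]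
        by_cases hlt : n₁ < n₂
        · rw [if_pos hlt]
          have key : ∀ k, ((n₂ = 0 ∨ k + n₂ ≤ t.length) ∧ BodyS t s₂ r₂ (k + n₂)) ↔
              Sat t (mkD false (n₂ - n₁) s₂ r₂).toLTL (k + n₁) := by
            intro k
            rw [sat_mkD_false]
            constructor
            · rintro ⟨hg, hb⟩
              have : k + n₂ ≤ t.length := by rcases hg with h | h <;> omega
              exact ⟨Or.inr (by omega), by rwa [show k + n₁ + (n₂ - n₁) = k + n₂ from by omega]⟩
            · rintro ⟨hg, hb⟩
              have : k + n₂ ≤ t.length := by rcases hg with h | h <;> omega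
              exact ⟨Or.inr (by omega), by rwa [show k + n₂ = k + n₁ + (n₂ - n₁) from by omega]⟩
          rcases r₁ with _ | a
          · rw [ex_singleton, sat_mkD_false, BodyS_some, ← key i]
            simp only [BodyS_none]
            tauto
          · rw [ex_map]
            have hIH : ∀ k, k ≤ t.length →
                ((Sat t a.toLTL k ∧ Sat t (mkD false (n₂ - n₁) s₂ r₂).toLTL k) ↔
                  ∃ c ∈ mergeF fuel a (mkD false (n₂ - n₁) s₂ r₂), Sat t c.toLTL k) :=
              fun k hk => ih _ _ (by simp at hsz ⊢; omega) k hk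
            constructor
            · rintro ⟨⟨hg, hs1, ha⟩, h2⟩
              have hk : i + n₁ ≤ t.length := by rcases hg with h | h <;> omega
              obtain ⟨x, hx, hsx⟩ := (hIH (i + n₁) hk).mp ⟨ha, (key i).mp h2⟩
              refine ⟨x, hx, ?_⟩
              rw [sat_mkD_false]
              exact ⟨hg, hs1, hsx⟩
            · rintro ⟨x, hx, hsx⟩
              rw [sat_mkD_false] at hsx
              obtain ⟨hg, hs1, hx'⟩ := hsx
              have hk : i + n₁ ≤ t.length := by rcases hg with h | h <;> omega
              obtain ⟨ha, hd⟩ := (hIH (i + n₁) hk).mpr ⟨x, hx, hx'⟩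
              exact ⟨⟨hg, hs1, ha⟩, (key i).mpr hd⟩
        · rw [if_neg hlt]
          have hgt : n₂ < n₁ := by omega
          have key : ∀ k, ((n₁ = 0 ∨ k + n₁ ≤ t.length) ∧ BodyS t s₁ r₁ (k + n₁)) ↔
              Sat t (mkD false (n₁ - n₂) s₁ r₁).toLTL (k + n₂) := by
            intro k
            rw [sat_mkD_false]
            constructor
            · rintro ⟨hg, hb⟩
              have : k + n₁ ≤ t.length := by rcases hg with h | h <;> omega
              exact ⟨Or.inr (by omega), by rwa [show k + n₂ + (n₁ - n₂) = k + n₁ from by omega]⟩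
            · rintro ⟨hg, hb⟩
              have : k + n₁ ≤ t.length := by rcases hg with h | h <;> omega
              exact ⟨Or.inr (by omega), by rwa [show k + n₁ = k + n₂ + (n₁ - n₂) from by omega]⟩
          rcases r₂ with _ | a
          · rw [ex_singleton, sat_mkD_false, BodyS_some, ← key i]
            simp only [BodyS_none]
            tauto
          · rw [ex_map]
            have hIH : ∀ k, k ≤ t.length →
                ((Sat t a.toLTL k ∧ Sat t (mkD false (n₁ - n₂) s₁ r₁).toLTL k) ↔
                  ∃ c ∈ mergeF fuel a (mkD false (n₁ - n₂) s₁ r₁), Sat t c.toLTL k) :=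
              fun k hk => ih _ _ (by simp at hsz ⊢; omega) k hk
            constructor
            · rintro ⟨h1, ⟨hg, hs2, ha⟩⟩
              have hk : i + n₂ ≤ t.length := by rcases hg with h | h <;> omega
              obtain ⟨x, hx, hsx⟩ := (hIH (i + n₂) hk).mp ⟨ha, (key i).mp h1⟩
              refine ⟨x, hx, ?_⟩
              rw [sat_mkD_false]
              exact ⟨hg, hs2, hsx⟩
            · rintro ⟨x, hx, hsx⟩
              rw [sat_mkD_false] at hsx
              obtain ⟨hg, hs2, hx'⟩ := hsx
              have hk : i + n₂ ≤ t.length := by rcases hg with h | h <;> omega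
              obtain ⟨ha, hd⟩ := (hIH (i + n₂) hk).mpr ⟨x, hx, hx'⟩
              exact ⟨(key i).mpr hd, ⟨hg, hs2, ha⟩⟩
    -- Case false/true ---------------------------------------------------
    · simp only [mergeF, isF_mkD, lead_mkD, sym_mkD, rest_mkD]
      rw [ex_append, sat_mkD_false, sat_mkD_true]
      have hsplit : (∃ k, i + n₂ ≤ k ∧ k ≤ t.length ∧ BodyS t s₂ r₂ k) ↔
          ((∃ k, (i + n₁) + (n₂ - n₁) ≤ k ∧ k ≤ t.length ∧ BodyS t s₂ r₂ k)
            ∨ (∃ m, n₂ ≤ m ∧ m < n₁ ∧ i + m ≤ t.length ∧ BodyS t s₂ r₂ (i + m))) := by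
        constructor
        · rintro ⟨k, h1, h2, hb⟩
          by_cases hk : i + n₁ + (n₂ - n₁) ≤ k
          · exact Or.inl ⟨k, hk, h2, hb⟩
          · exact Or.inr ⟨k - i, by omega, by omega, by omega,
              by rwa [show i + (k - i) = k from by omega]⟩
        · rintro (⟨k, h1, h2, hb⟩ | ⟨m, h1, h2, h3, hb⟩)
          · exact ⟨k, by omega, h2, hb⟩
          · exact ⟨i + m, by omega, h3, hb⟩
      rw [hsplit, and_or_left]
      have hA : (((n₁ = 0 ∨ i + n₁ ≤ t.length) ∧ BodyS t s₁ r₁ (i + n₁)) ∧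
          (∃ k, (i + n₁) + (n₂ - n₁) ≤ k ∧ k ≤ t.length ∧ BodyS t s₂ r₂ k)) ↔
          (∃ c ∈ (match r₁ with
            | none => [mkD false n₁ s₁ (some (mkD true (n₂ - n₁) s₂ r₂))]
            | some a => List.map (fun c => mkD false n₁ s₁ (some c))
                (mergeF fuel a (mkD true (n₂ - n₁) s₂ r₂))), Sat t c.toLTL i) := by
        rcases r₁ with _ | a
        · rw [ex_singleton, sat_mkD_false, BodyS_some, sat_mkD_true]
          simp only [BodyS_none]
          tauto
        · rw [ex_map]
          have hIH : ∀ k, k ≤ t.length →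
              ((Sat t a.toLTL k ∧ Sat t (mkD true (n₂ - n₁) s₂ r₂).toLTL k) ↔
                ∃ c ∈ mergeF fuel a (mkD true (n₂ - n₁) s₂ r₂), Sat t c.toLTL k) :=
            fun k hk => ih _ _ (by simp at hsz ⊢; omega) k hk
          constructor
          · rintro ⟨⟨hg, hs1, ha⟩, h2⟩
            have hk : i + n₁ ≤ t.length := by rcases hg with h | h <;> omega
            obtain ⟨x, hx, hsx⟩ := (hIH (i + n₁) hk).mp ⟨ha, (sat_mkD_true t _ s₂ r₂ _).mpr h2⟩
            refine ⟨x, hx, ?_⟩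
            rw [sat_mkD_false]
            exact ⟨hg, hs1, hsx⟩
          · rintro ⟨x, hx, hsx⟩
            rw [sat_mkD_false] at hsx
            obtain ⟨hg, hs1, hx'⟩ := hsx
            have hk : i + n₁ ≤ t.length := by rcases hg with h | h <;> omega
            obtain ⟨ha, hd⟩ := (hIH (i + n₁) hk).mpr ⟨x, hx, hx'⟩
            exact ⟨⟨hg, hs1, ha⟩, (sat_mkD_true t _ s₂ r₂ _).mp hd⟩
      have hB : (((n₁ = 0 ∨ i + n₁ ≤ t.length) ∧ BodyS t s₁ r₁ (i + n₁)) ∧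
          (∃ m, n₂ ≤ m ∧ m < n₁ ∧ i + m ≤ t.length ∧ BodyS t s₂ r₂ (i + m))) ↔
          (∃ c ∈ (List.range' n₂ (n₁ - n₂)).flatMap
              (fun m => mergeF fuel (mkD false m s₂ r₂) (mkD false n₁ s₁ r₁)),
            Sat t c.toLTL i) := by
        rw [ex_flatMap]
        have hIH : ∀ m, ((Sat t (mkD false m s₂ r₂).toLTL i ∧ Sat t (mkD false n₁ s₁ r₁).toLTL i) ↔
            ∃ c ∈ mergeF fuel (mkD false m s₂ r₂) (mkD false n₁ s₁ r₁), Sat t c.toLTL i) :=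
          fun m => ih _ _ (by simp at hsz ⊢; omega) i hi
        constructor
        · rintro ⟨hd₁, m, hm1, hm2, hm3, hb⟩
          refine ⟨m, List.mem_range'_1.mpr ⟨hm1, by omega⟩, ?_⟩
          apply (hIH m).mp
          refine ⟨?_, ?_⟩
          · rw [sat_mkD_false]
            exact ⟨Or.inr hm3, hb⟩
          · rw [sat_mkD_false]
            exact hd₁
        · rintro ⟨m, hm, x, hx, hsx⟩
          obtain ⟨hm1, hm2⟩ := List.mem_range'_1.mp hm
          obtain ⟨h2, h1⟩ := (hIH m).mpr ⟨x, hx, hsx⟩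
          rw [sat_mkD_false] at h2 h1
          obtain ⟨hg2, hb2⟩ := h2
          refine ⟨h1, m, hm1, by omega, ?_, hb2⟩
          rcases hg2 with h | h <;> omega
      exact or_congr hA hB
    -- Case true/false ---------------------------------------------------
    · simp only [mergeF, isF_mkD, lead_mkD, sym_mkD, rest_mkD]
      rw [ex_append, sat_mkD_true, sat_mkD_false, and_comm]
      have hsplit : (∃ k, i + n₁ ≤ k ∧ k ≤ t.length ∧ BodyS t s₁ r₁ k) ↔
          ((∃ k, (i + n₂) + (n₁ - n₂) ≤ k ∧ k ≤ t.length ∧ BodyS t s₁ r₁ k)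
            ∨ (∃ m, n₁ ≤ m ∧ m < n₂ ∧ i + m ≤ t.length ∧ BodyS t s₁ r₁ (i + m))) := by
        constructor
        · rintro ⟨k, h1, h2, hb⟩
          by_cases hk : i + n₂ + (n₁ - n₂) ≤ k
          · exact Or.inl ⟨k, hk, h2, hb⟩
          · exact Or.inr ⟨k - i, by omega, by omega, by omega,
              by rwa [show i + (k - i) = k from by omega]⟩
        · rintro (⟨k, h1, h2, hb⟩ | ⟨m, h1, h2, h3, hb⟩)
          · exact ⟨k, by omega, h2, hb⟩
          · exact ⟨i + m, by omega, h3, hb⟩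
      rw [hsplit, and_or_left]
      have hA : (((n₂ = 0 ∨ i + n₂ ≤ t.length) ∧ BodyS t s₂ r₂ (i + n₂)) ∧
          (∃ k, (i + n₂) + (n₁ - n₂) ≤ k ∧ k ≤ t.length ∧ BodyS t s₁ r₁ k)) ↔
          (∃ c ∈ (match r₂ with
            | none => [mkD false n₂ s₂ (some (mkD true (n₁ - n₂) s₁ r₁))]
            | some a => List.map (fun c => mkD false n₂ s₂ (some c))
                (mergeF fuel a (mkD true (n₁ - n₂) s₁ r₁))), Sat t c.toLTL i) := by
        rcases r₂ with _ | a
        · rw [ex_singleton, sat_mkD_false, BodyS_some, sat_mkD_true]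
          simp only [BodyS_none]
          tauto
        · rw [ex_map]
          have hIH : ∀ k, k ≤ t.length →
              ((Sat t a.toLTL k ∧ Sat t (mkD true (n₁ - n₂) s₁ r₁).toLTL k) ↔
                ∃ c ∈ mergeF fuel a (mkD true (n₁ - n₂) s₁ r₁), Sat t c.toLTL k) :=
            fun k hk => ih _ _ (by simp at hsz ⊢; omega) k hk
          constructor
          · rintro ⟨⟨hg, hs2, ha⟩, h2⟩
            have hk : i + n₂ ≤ t.length := by rcases hg with h | h <;> omega
            obtain ⟨x, hx, hsx⟩ := (hIH (i + n₂) hk).mp ⟨ha, (sat_mkD_true t _ s₁ r₁ _).mpr h2⟩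
            refine ⟨x, hx, ?_⟩
            rw [sat_mkD_false]
            exact ⟨hg, hs2, hsx⟩
          · rintro ⟨x, hx, hsx⟩
            rw [sat_mkD_false] at hsx
            obtain ⟨hg, hs2, hx'⟩ := hsx
            have hk : i + n₂ ≤ t.length := by rcases hg with h | h <;> omega
            obtain ⟨ha, hd⟩ := (hIH (i + n₂) hk).mpr ⟨x, hx, hx'⟩
            exact ⟨⟨hg, hs2, ha⟩, (sat_mkD_true t _ s₁ r₁ _).mp hd⟩
      have hB : (((n₂ = 0 ∨ i + n₂ ≤ t.length) ∧ BodyS t s₂ r₂ (i + n₂)) ∧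
          (∃ m, n₁ ≤ m ∧ m < n₂ ∧ i + m ≤ t.length ∧ BodyS t s₁ r₁ (i + m))) ↔
          (∃ c ∈ (List.range' n₁ (n₂ - n₁)).flatMap
              (fun m => mergeF fuel (mkD false m s₁ r₁) (mkD false n₂ s₂ r₂)),
            Sat t c.toLTL i) := by
        rw [ex_flatMap]
        have hIH : ∀ m, ((Sat t (mkD false m s₁ r₁).toLTL i ∧ Sat t (mkD false n₂ s₂ r₂).toLTL i) ↔
            ∃ c ∈ mergeF fuel (mkD false m s₁ r₁) (mkD false n₂ s₂ r₂), Sat t c.toLTL i) :=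
          fun m => ih _ _ (by simp at hsz ⊢; omega) i hi
        constructor
        · rintro ⟨hd₂, m, hm1, hm2, hm3, hb⟩
          refine ⟨m, List.mem_range'_1.mpr ⟨hm1, by omega⟩, ?_⟩
          apply (hIH m).mp
          refine ⟨?_, ?_⟩
          · rw [sat_mkD_false]
            exact ⟨Or.inr hm3, hb⟩
          · rw [sat_mkD_false]
            exact hd₂
        · rintro ⟨m, hm, x, hx, hsx⟩
          obtain ⟨hm1, hm2⟩ := List.mem_range'_1.mp hm
          obtain ⟨h1, h2⟩ := (hIH m).mpr ⟨x, hx, hsx⟩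
          rw [sat_mkD_false] at h1 h2
          obtain ⟨hg1, hb1⟩ := h1
          refine ⟨h2, m, hm1, by omega, ?_, hb1⟩
          rcases hg1 with h | h <;> omega
      exact or_congr hA hB
    -- Case true/true ----------------------------------------------------
    · simp only [mergeF, isF_mkD, lead_mkD, sym_mkD, rest_mkD]
      rw [ex_map, ex_append]
      have hIH₁ : ∀ j, j ≤ t.length →
          ((Sat t (mkD false n₁ s₁ r₁).toLTL j ∧ Sat t (mkD true n₂ s₂ r₂).toLTL j) ↔
            ∃ c ∈ mergeF fuel (mkD false n₁ s₁ r₁) (mkD true n₂ s₂ r₂), Sat t c.toLTL j) :=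
        fun j hj => ih _ _ (by simp at hsz ⊢; omega) j hj
      have hIH₂ : ∀ j, j ≤ t.length →
          ((Sat t (mkD false n₂ s₂ r₂).toLTL j ∧ Sat t (mkD true n₁ s₁ r₁).toLTL j) ↔
            ∃ c ∈ mergeF fuel (mkD false n₂ s₂ r₂) (mkD true n₁ s₁ r₁), Sat t c.toLTL j) :=
        fun j hj => ih _ _ (by simp at hsz ⊢; omega) j hj
      have h1 : (∃ x ∈ mergeF fuel (mkD false n₁ s₁ r₁) (mkD true n₂ s₂ r₂),
            Sat t (addF x).toLTL i) ↔
          ∃ j, i ≤ j ∧ j ≤ t.length ∧ Sat t (mkD false n₁ s₁ r₁).toLTL j ∧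
            Sat t (mkD true n₂ s₂ r₂).toLTL j := by
        constructor
        · rintro ⟨x, hx, hsx⟩
          rw [sat_addF t x i hi] at hsx
          obtain ⟨j, hj1, hj2, hsj⟩ := hsx
          exact ⟨j, hj1, hj2, (hIH₁ j hj2).mpr ⟨x, hx, hsj⟩⟩
        · rintro ⟨j, hj1, hj2, hs⟩
          obtain ⟨x, hx, hsx⟩ := (hIH₁ j hj2).mp hs
          exact ⟨x, hx, (sat_addF t x i hi).mpr ⟨j, hj1, hj2, hsx⟩⟩
      have h2 : (∃ x ∈ mergeF fuel (mkD false n₂ s₂ r₂) (mkD true n₁ s₁ r₁),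
            Sat t (addF x).toLTL i) ↔
          ∃ j, i ≤ j ∧ j ≤ t.length ∧ Sat t (mkD false n₂ s₂ r₂).toLTL j ∧
            Sat t (mkD true n₁ s₁ r₁).toLTL j := by
        constructor
        · rintro ⟨x, hx, hsx⟩
          rw [sat_addF t x i hi] at hsx
          obtain ⟨j, hj1, hj2, hsj⟩ := hsx
          exact ⟨j, hj1, hj2, (hIH₂ j hj2).mpr ⟨x, hx, hsj⟩⟩
        · rintro ⟨j, hj1, hj2, hs⟩
          obtain ⟨x, hx, hsx⟩ := (hIH₂ j hj2).mp hs
          exact ⟨x, hx, (sat_addF t x i hi).mpr ⟨j, hj1, hj2, hsx⟩⟩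
      rw [h1, h2, sat_mkD_true, sat_mkD_true]
      constructor
      · rintro ⟨⟨k₁, hk1a, hk1b, hb1⟩, ⟨k₂, hk2a, hk2b, hb2⟩⟩
        by_cases hc : k₁ + n₂ ≤ k₂ + n₁
        · left
          refine ⟨k₁ - n₁, by omega, by omega, ?_, ?_⟩
          · rw [sat_mkD_false]
            exact ⟨Or.inr (by omega), by rwa [show k₁ - n₁ + n₁ = k₁ from by omega]⟩
          · rw [sat_mkD_true]
            exact ⟨k₂, by omega, hk2b, hb2⟩
        · right
          refine ⟨k₂ - n₂, by omega, by omega, ?_, ?_⟩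
          · rw [sat_mkD_false]
            exact ⟨Or.inr (by omega), by rwa [show k₂ - n₂ + n₂ = k₂ from by omega]⟩
          · rw [sat_mkD_true]
            exact ⟨k₁, by omega, hk1b, hb1⟩
      · rintro (⟨j, hj1, hj2, hx, hf⟩ | ⟨j, hj1, hj2, hx, hf⟩)
        · rw [sat_mkD_false] at hx
          rw [sat_mkD_true] at hf
          obtain ⟨hg, hb⟩ := hx
          obtain ⟨k, hka, hkb, hbk⟩ := hf
          refine ⟨⟨j + n₁, by omega, by rcases hg with h | h <;> omega, hb⟩,
            ⟨k, by omega, hkb, hbk⟩⟩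
        · rw [sat_mkD_false] at hx
          rw [sat_mkD_true] at hf
          obtain ⟨hg, hb⟩ := hx
          obtain ⟨k, hka, hkb, hbk⟩ := hf
          refine ⟨⟨k, by omega, hkb, hbk⟩,
            ⟨j + n₂, by omega, by rcases hg with h | h <;> omega, hb⟩⟩

end DirProof
namespace DirProof
variable {P : Type}

def mergeTop (d₁ d₂ : DLTL P) : List (DLTL P) := mergeF (d₁.size + d₂.size) d₁ d₂

theorem mergeTop_correct (t : List (Set P)) (d₁ d₂ : DLTL P) (i : ℕ) (hi : i ≤ t.length) :
    (Sat t d₁.toLTL i ∧ Sat t d₂.toLTL i) ↔ ∃ c ∈ mergeTop d₁ d₂, Sat t c.toLTL i :=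
  mergeF_correct t _ d₁ d₂ (le_refl _) i hi

/-- Merge a nonempty list (head `d`, tail `L`) of directed formulas. -/
def mergeAll (d : DLTL P) : List (DLTL P) → List (DLTL P)
  | [] => [d]
  | e :: L => (mergeAll e L).flatMap (fun c => mergeTop d c)

theorem mergeAll_correct (t : List (Set P)) :
    ∀ (L : List (DLTL P)) (d : DLTL P) (i : ℕ), i ≤ t.length →
      ((Sat t d.toLTL i ∧ ∀ e ∈ L, Sat t e.toLTL i) ↔
        ∃ c ∈ mergeAll d L, Sat t c.toLTL i) := by
  intro L
  induction L with
  | nil =>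
    intro d i hi
    simp [mergeAll]
  | cons e L ihL =>
    intro d i hi
    rw [mergeAll, ex_flatMap]
    constructor
    · rintro ⟨hd, hL⟩
      have he : Sat t e.toLTL i := hL e (List.mem_cons_self)
      have : Sat t e.toLTL i ∧ ∀ x ∈ L, Sat t x.toLTL i :=
        ⟨he, fun x hx => hL x (List.mem_cons_of_mem _ hx)⟩
      obtain ⟨c, hc, hsc⟩ := (ihL e i hi).mp this
      obtain ⟨c', hc', hsc'⟩ := (mergeTop_correct t d c i hi).mp ⟨hd, hsc⟩
      exact ⟨c, hc, c', hc', hsc'⟩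
    · rintro ⟨c, hc, c', hc', hsc'⟩
      obtain ⟨hd, hsc⟩ := (mergeTop_correct t d c i hi).mpr ⟨c', hc', hsc'⟩
      obtain ⟨he, hL⟩ := (ihL e i hi).mpr ⟨c, hc, hsc⟩
      refine ⟨hd, ?_⟩
      rintro x hx
      rcases List.mem_cons.mp hx with rfl | hx
      · exact he
      · exact hL x hx

/-- Disjunctive normal form of a PBC, as a list of (nonempty) lists. -/
def toDNF : PBC P → List (List (DLTL P))
  | .base d => [[d]]
  | .and a b => (toDNF a).flatMap (fun L₁ => (toDNF b).map (fun L₂ => L₁ ++ L₂))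
  | .or a b => toDNF a ++ toDNF b

theorem toDNF_ne_nil (b : PBC P) : toDNF b ≠ [] := by
  induction b with
  | base d => simp [toDNF]
  | and a b iha ihb =>
    simp only [toDNF, ne_eq, List.flatMap_eq_nil_iff]
    intro h
    obtain ⟨L₁, hL₁⟩ := List.exists_mem_of_ne_nil _ iha
    obtain ⟨L₂, hL₂⟩ := List.exists_mem_of_ne_nil _ ihb
    have := h L₁ hL₁
    simp only [List.map_eq_nil_iff] at this
    exact ihb this
  | or a b iha ihb =>
    simp only [toDNF, ne_eq, List.append_eq_nil_iff]
    tauto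

theorem toDNF_mem_ne_nil (b : PBC P) : ∀ L ∈ toDNF b, L ≠ [] := by
  induction b with
  | base d => simp [toDNF]
  | and a b iha ihb =>
    intro L hL
    simp only [toDNF, List.mem_flatMap, List.mem_map] at hL
    obtain ⟨L₁, hL₁, L₂, hL₂, rfl⟩ := hL
    have := iha L₁ hL₁
    simp only [ne_eq, List.append_eq_nil_iff]
    tauto
  | or a b iha ihb =>
    intro L hL
    rcases List.mem_append.mp hL with h | h
    · exact iha L h
    · exact ihb L h

theorem toDNF_correct (t : List (Set P)) (b : PBC P) (i : ℕ) :
    PBC.sat t b i ↔ ∃ L ∈ toDNF b, ∀ d ∈ L, Sat t d.toLTL i := by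
  induction b with
  | base d => simp [toDNF, PBC.sat]
  | and a b iha ihb =>
    show (PBC.sat t a i ∧ PBC.sat t b i) ↔ _
    rw [iha, ihb, toDNF, ex_flatMap]
    constructor
    · rintro ⟨⟨L₁, hL₁, h₁⟩, ⟨L₂, hL₂, h₂⟩⟩
      refine ⟨L₁, hL₁, L₁ ++ L₂, List.mem_map_of_mem hL₂, ?_⟩
      intro d hd
      rcases List.mem_append.mp hd with h | h
      · exact h₁ d h
      · exact h₂ d h
    · rintro ⟨L₁, hL₁, L, hL, hall⟩
      obtain ⟨L₂, hL₂, rfl⟩ := List.mem_map.mp hL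
      exact ⟨⟨L₁, hL₁, fun d hd => hall d (List.mem_append_left _ hd)⟩,
        ⟨L₂, hL₂, fun d hd => hall d (List.mem_append_right _ hd)⟩⟩
  | or a b iha ihb =>
    show (PBC.sat t a i ∨ PBC.sat t b i) ↔ _
    rw [iha, ihb, toDNF, ex_append]

/-- X applied to a PBC. -/
def nextPBC : PBC P → PBC P
  | .base d => .base (nextD d)
  | .and a b => .and (nextPBC a) (nextPBC b)
  | .or a b => .or (nextPBC a) (nextPBC b)

theorem sat_nextPBC (t : List (Set P)) (b : PBC P) (i : ℕ) :
    PBC.sat t (nextPBC b) i ↔ (i < t.length ∧ PBC.sat t b (i + 1)) := by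
  induction b with
  | base d => exact sat_nextD t d i
  | and a b iha ihb =>
    show (PBC.sat t (nextPBC a) i ∧ PBC.sat t (nextPBC b) i) ↔ _
    rw [iha, ihb]
    show _ ↔ (i < t.length ∧ PBC.sat t a (i+1) ∧ PBC.sat t b (i+1))
    tauto
  | or a b iha ihb =>
    show (PBC.sat t (nextPBC a) i ∨ PBC.sat t (nextPBC b) i) ↔ _
    rw [iha, ihb]
    show _ ↔ (i < t.length ∧ (PBC.sat t a (i+1) ∨ PBC.sat t b (i+1)))
    tauto

/-- An unsatisfiable directed formula. -/
def falseD (p : P) : DLTL P := .xs 0 ⟨(p, true), [(p, false)]⟩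

theorem sat_falseD (t : List (Set P)) (p : P) (i : ℕ) : ¬ Sat t (falseD p).toLTL i := by
  rintro h
  have : Sat t (.and (.atom p) (.natom p)) i := h
  exact this.2 this.1

/-- Disjunction of a list of directed formulas as a PBC (with a fallback). -/
def pbcOr (p : P) (l : List (DLTL P)) : PBC P :=
  l.foldr (fun d acc => .or (.base d) acc) (.base (falseD p))

theorem sat_pbcOr (t : List (Set P)) (p : P) (l : List (DLTL P)) (i : ℕ) :
    PBC.sat t (pbcOr p l) i ↔ ∃ d ∈ l, Sat t d.toLTL i := by
  induction l with
  | nil =>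
    simp only [pbcOr, List.foldr_nil, List.not_mem_nil]
    constructor
    · intro h
      exact absurd h (sat_falseD t p i)
    · rintro ⟨d, hd, -⟩
      exact absurd hd (by simp)
  | cons d l ihl =>
    show (Sat t d.toLTL i ∨ PBC.sat t (pbcOr p l) i) ↔ _
    rw [ihl]
    simp only [List.mem_cons]
    constructor
    · rintro (h | ⟨e, he, hs⟩)
      · exact ⟨d, Or.inl rfl, h⟩
      · exact ⟨e, Or.inr he, hs⟩
    · rintro ⟨e, (rfl | he), hs⟩
      · exact Or.inl hs
      · exact Or.inr ⟨e, he, hs⟩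

/-- Fold a list of PBCs into a disjunction with a given head. -/
def pbcBigOr (b : PBC P) (l : List (PBC P)) : PBC P := l.foldl .or b

theorem sat_pbcBigOr (t : List (Set P)) (i : ℕ) :
    ∀ (l : List (PBC P)) (b : PBC P),
      PBC.sat t (pbcBigOr b l) i ↔ (PBC.sat t b i ∨ ∃ x ∈ l, PBC.sat t x i) := by
  intro l
  induction l with
  | nil => intro b; simp [pbcBigOr]
  | cons x l ihl =>
    intro b
    show PBC.sat t (pbcBigOr (.or b x) l) i ↔ _
    rw [ihl]
    show (PBC.sat t b i ∨ PBC.sat t x i) ∨ _ ↔ _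
    simp only [List.mem_cons]
    constructor
    · rintro ((h | h) | ⟨y, hy, hs⟩)
      · exact Or.inl h
      · exact Or.inr ⟨x, Or.inl rfl, h⟩
      · exact Or.inr ⟨y, Or.inr hy, hs⟩
    · rintro (h | ⟨y, (rfl | hy), hs⟩)
      · exact Or.inl (Or.inl h)
      · exact Or.inl (Or.inr hs)
      · exact Or.inr ⟨y, hy, hs⟩

/-- Extract some atomic proposition from an LTL formula. -/
def someAtom : LTL P → P
  | .atom p => p
  | .natom p => p
  | .and a _ => someAtom a
  | .or a _ => someAtom a
  | .not a => someAtom a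
  | .next a => someAtom a
  | .fin a => someAtom a
  | .glob a => someAtom a

end DirProof
open DirProof in
theorem fx_fragment_eq_pbc_of_directed {P : Type} (φ : LTL P) (hφ : IsFX φ) :
    ∃ b : PBC P, ∀ (t : List (Set P)) (i : ℕ), 1 ≤ i → i ≤ t.length →
      (Sat t φ i ↔ PBC.sat t b i) := by
  induction φ with
  | atom p => exact ⟨.base (.xs 0 ⟨(p, true), []⟩), fun t i _ _ => Iff.rfl⟩
  | natom p => exact ⟨.base (.xs 0 ⟨(p, false), []⟩), fun t i _ _ => Iff.rfl⟩
  | and φ ψ ihφ ihψ =>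
    obtain ⟨hφ₁, hφ₂⟩ := hφ
    obtain ⟨b₁, h₁⟩ := ihφ hφ₁
    obtain ⟨b₂, h₂⟩ := ihψ hφ₂
    refine ⟨.and b₁ b₂, fun t i hi1 hi2 => ?_⟩
    show (Sat t φ i ∧ Sat t ψ i) ↔ (PBC.sat t b₁ i ∧ PBC.sat t b₂ i)
    rw [h₁ t i hi1 hi2, h₂ t i hi1 hi2]
  | or φ ψ ihφ ihψ =>
    obtain ⟨hφ₁, hφ₂⟩ := hφ
    obtain ⟨b₁, h₁⟩ := ihφ hφ₁
    obtain ⟨b₂, h₂⟩ := ihψ hφ₂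
    refine ⟨.or b₁ b₂, fun t i hi1 hi2 => ?_⟩
    show (Sat t φ i ∨ Sat t ψ i) ↔ (PBC.sat t b₁ i ∨ PBC.sat t b₂ i)
    rw [h₁ t i hi1 hi2, h₂ t i hi1 hi2]
  | not φ ihφ => exact hφ.elim
  | next φ ihφ =>
    obtain ⟨b, h⟩ := ihφ hφ
    refine ⟨nextPBC b, fun t i hi1 hi2 => ?_⟩
    rw [sat_nextPBC]
    show (i < t.length ∧ Sat t φ (i + 1)) ↔ _
    constructor
    · rintro ⟨hl, hs⟩
      exact ⟨hl, (h t (i + 1) (by omega) (by omega)).mp hs⟩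
    · rintro ⟨hl, hs⟩
      exact ⟨hl, (h t (i + 1) (by omega) (by omega)).mpr hs⟩
  | fin φ ihφ =>
    obtain ⟨b, h⟩ := ihφ hφ
    have p₀ : P := someAtom φ
    let g : List (DLTL P) → PBC P := fun L =>
      match L with
      | [] => .base (falseD p₀)
      | d :: L' => pbcOr p₀ ((mergeAll d L').map addF)
    have hg : ∀ L ∈ toDNF b, ∀ (t : List (Set P)) (i : ℕ), 1 ≤ i → i ≤ t.length →
        ((∃ j, i ≤ j ∧ j ≤ t.length ∧ ∀ d ∈ L, Sat t d.toLTL j) ↔ PBC.sat t (g L) i) := by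
      intro L hL t i hi1 hi2
      have hne := toDNF_mem_ne_nil b L hL
      rcases L with _ | ⟨d, L'⟩
      · exact absurd rfl hne
      show _ ↔ PBC.sat t (pbcOr p₀ ((mergeAll d L').map addF)) i
      rw [sat_pbcOr, ex_map]
      constructor
      · rintro ⟨j, hj1, hj2, hall⟩
        have : Sat t d.toLTL j ∧ ∀ e ∈ L', Sat t e.toLTL j :=
          ⟨hall d (List.mem_cons_self), fun e he => hall e (List.mem_cons_of_mem _ he)⟩
        obtain ⟨c, hc, hsc⟩ := (mergeAll_correct t L' d j hj2).mp this
        exact ⟨c, hc, (sat_addF t c i hi2).mpr ⟨j, hj1, hj2, hsc⟩⟩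
      · rintro ⟨c, hc, hsc⟩
        obtain ⟨j, hj1, hj2, hsj⟩ := (sat_addF t c i hi2).mp hsc
        obtain ⟨hd, hL'⟩ := (mergeAll_correct t L' d j hj2).mpr ⟨c, hc, hsj⟩
        refine ⟨j, hj1, hj2, ?_⟩
        intro e he
        rcases List.mem_cons.mp he with rfl | he
        · exact hd
        · exact hL' e he
    rcases hA : toDNF b with _ | ⟨L₀, A'⟩
    · exact absurd hA (toDNF_ne_nil b)
    refine ⟨pbcBigOr (g L₀) (A'.map g), fun t i hi1 hi2 => ?_⟩
    rw [sat_pbcBigOr, ex_map g A']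
    have hmem : ∀ x, x ∈ toDNF b ↔ (x = L₀ ∨ x ∈ A') := by
      intro x
      rw [hA, List.mem_cons]
    show (∃ j, i ≤ j ∧ j ≤ t.length ∧ Sat t φ j) ↔ _
    constructor
    · rintro ⟨j, hj1, hj2, hs⟩
      rw [h t j (by omega) hj2, toDNF_correct] at hs
      obtain ⟨L, hL, hall⟩ := hs
      have hgL := (hg L hL t i hi1 hi2).mp ⟨j, hj1, hj2, hall⟩
      rcases (hmem L).mp hL with rfl | hL'
      · exact Or.inl hgL
      · exact Or.inr ⟨L, hL', hgL⟩
    · rintro (hgL | ⟨x, hx, hsx⟩)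
      · obtain ⟨j, hj1, hj2, hall⟩ :=
          (hg L₀ ((hmem L₀).mpr (Or.inl rfl)) t i hi1 hi2).mpr hgL
        refine ⟨j, hj1, hj2, ?_⟩
        rw [h t j (by omega) hj2, toDNF_correct]
        exact ⟨L₀, (hmem L₀).mpr (Or.inl rfl), hall⟩
      · obtain ⟨j, hj1, hj2, hall⟩ :=
          (hg x ((hmem x).mpr (Or.inr hx)) t i hi1 hi2).mpr hsx
        refine ⟨j, hj1, hj2, ?_⟩
        rw [h t j (by omega) hj2, toDNF_correct]
        exact ⟨x, (hmem x).mpr (Or.inr hx), hall⟩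
  | glob φ ihφ => exact hφ.elim
end

section
/- The greedy algorithm for set cover achieves an H_n-approximation: given sets S_1,…,S_m ⊆ [1,n] whose union is [1,n], if the minimum cover has size k, the greedy algorithm (repeatedly selecting the set covering the most yet-uncovered elements) produces a cover of size at most k · H_n, where H_n = 1 + 1/2 + ⋯ + 1/n. -/
/-- The greedy algorithm for set cover achieves an `H_n`-approximation:
given sets `S i ⊆ Fin n` covering `Fin n`, any greedy run (`g j` is a set
maximizing the number of newly covered elements at step `j`) that stops at
time `T` (everything covered at `T`, not before) uses at most `k · H_n` sets,
where `k` is the size of a minimum cover. -/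
theorem greedy_set_cover_approx (n m : ℕ) (S : Fin m → Finset (Fin n))
    (hcov : (Finset.univ : Finset (Fin m)).biUnion S = Finset.univ)
    (g : ℕ → Fin m) (covered : ℕ → Finset (Fin n))
    (hcovered : ∀ j, covered j = (Finset.range j).biUnion (fun l => S (g l)))
    (hgreedy : ∀ j, ∀ i : Fin m,
      ((S i) \ covered j).card ≤ ((S (g j)) \ covered j).card)
    (T : ℕ) (hT : covered T = Finset.univ)
    (hbefore : ∀ j < T, covered j ≠ Finset.univ)
    (k : ℕ) (I : Finset (Fin m)) (hI : I.biUnion S = Finset.univ)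
    (hk : I.card = k)
    (hmin : ∀ J : Finset (Fin m), J.biUnion S = Finset.univ → k ≤ J.card) :
    (T : ℝ) ≤ k * ∑ i ∈ Finset.range n, (1 : ℝ) / (i + 1) := by
  classical
  set c : ℕ → ℕ := fun j => ((S (g j)) \ covered j).card with hc
  set u : ℕ → ℕ := fun j => n - (covered j).card with hu
  have hcardle : ∀ j, (covered j).card ≤ n := fun j => by
    simpa using Finset.card_le_card (Finset.subset_univ (covered j))
  have hcov0 : covered 0 = ∅ := by simp [hcovered]
  have hsucc : ∀ j, covered (j+1) = S (g j) ∪ covered j := by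
    intro j
    rw [hcovered (j+1), hcovered j, Finset.range_add_one, Finset.biUnion_insert]
  have hcardsucc : ∀ j, (covered (j+1)).card = (covered j).card + c j := by
    intro j
    rw [hsucc j, ← Finset.card_sdiff_add_card (S (g j)) (covered j)]
    exact add_comm _ _
  have husucc : ∀ j, u (j+1) = u j - c j := by
    intro j
    have h1 := hcardsucc j
    have h2 := hcardle (j+1)
    have h3 := hcardle j
    simp only [hu]
    omega
  have hcle : ∀ j, c j ≤ u j := by
    intro j
    have h1 := hcardsucc j
    have h2 := hcardle (j+1)
    simp only [hu]
    omega
  have hupos : ∀ j < T, 0 < u j := by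
    intro j hj
    have hne := hbefore j hj
    have hss : covered j ⊂ Finset.univ := Finset.ssubset_univ_iff.2 hne
    have := Finset.card_lt_card hss
    simp only [Finset.card_univ, Fintype.card_fin] at this
    simp only [hu]
    omega
  have hkey : ∀ j < T, u j ≤ k * c j := by
    intro j hj
    have hsub : Finset.univ \ covered j ⊆ I.biUnion (fun i => S i \ covered j) := by
      intro x hx
      simp only [Finset.mem_sdiff, Finset.mem_univ, true_and] at hx
      have hx2 : x ∈ I.biUnion S := by rw [hI]; exact Finset.mem_univ x
      rcases Finset.mem_biUnion.1 hx2 with ⟨i, hi, hxi⟩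
      exact Finset.mem_biUnion.2 ⟨i, hi, Finset.mem_sdiff.2 ⟨hxi, hx⟩⟩
    have h1 : u j ≤ (I.biUnion (fun i => S i \ covered j)).card := by
      have husd : u j = (Finset.univ \ covered j).card := by
        rw [Finset.card_sdiff_of_subset (Finset.subset_univ _)]
        simp [hu]
      rw [husd]
      exact Finset.card_le_card hsub
    have h2 : (I.biUnion (fun i => S i \ covered j)).card ≤ ∑ i ∈ I, (S i \ covered j).card :=
      Finset.card_biUnion_le
    have h3 : ∑ i ∈ I, (S i \ covered j).card ≤ ∑ _i ∈ I, c j :=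
      Finset.sum_le_sum (fun i _ => hgreedy j i)
    have h4 : ∑ _i ∈ I, c j = k * c j := by rw [Finset.sum_const, hk, smul_eq_mul]
    omega
  have hmono : ∀ t, u (t+1) ≤ u t := fun t => by rw [husucc t]; omega
  have hmono0 : ∀ t, u t ≤ u 0 := by
    intro t
    induction t with
    | zero => exact le_refl _
    | succ t ih => exact le_trans (hmono t) ih
  have hstep : ∀ j < T, (1:ℝ) ≤ k * ∑ i ∈ Finset.Ico (u (j+1)) (u j), (1:ℝ)/(i+1) := by
    intro j hj
    have hb : 0 < u j := hupos j hj
    have hcard : (Finset.Ico (u (j+1)) (u j)).card = c j := by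
      rw [Nat.card_Ico, husucc j]
      have := hcle j
      omega
    have hterm : ∀ i ∈ Finset.Ico (u (j+1)) (u j), (1:ℝ)/(u j) ≤ (1:ℝ)/(i+1) := by
      intro i hi
      rw [Finset.mem_Ico] at hi
      apply one_div_le_one_div_of_le
      · positivity
      · have : (i:ℕ) + 1 ≤ u j := hi.2
        exact_mod_cast this
    have hsum : (c j : ℝ) * ((1:ℝ)/(u j)) ≤ ∑ i ∈ Finset.Ico (u (j+1)) (u j), (1:ℝ)/(i+1) := by
      have h := Finset.card_nsmul_le_sum (Finset.Ico (u (j+1)) (u j))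
        (fun i => (1:ℝ)/(i+1)) ((1:ℝ)/(u j)) hterm
      rwa [hcard, nsmul_eq_mul] at h
    have hkc : (u j : ℝ) ≤ (k : ℝ) * (c j) := by exact_mod_cast hkey j hj
    have hbR : (0:ℝ) < u j := by exact_mod_cast hb
    calc (1:ℝ) = (u j) * ((1:ℝ)/(u j)) := by field_simp
      _ ≤ ((k:ℝ) * (c j)) * ((1:ℝ)/(u j)) := by
          apply mul_le_mul_of_nonneg_right hkc
          positivity
      _ = (k:ℝ) * ((c j) * ((1:ℝ)/(u j))) := by ring
      _ ≤ (k:ℝ) * ∑ i ∈ Finset.Ico (u (j+1)) (u j), (1:ℝ)/(i+1) := by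
          apply mul_le_mul_of_nonneg_left hsum
          positivity
  have htel : ∀ t, ∑ j ∈ Finset.range t, ∑ i ∈ Finset.Ico (u (j+1)) (u j), (1:ℝ)/(i+1)
      = ∑ i ∈ Finset.Ico (u t) (u 0), (1:ℝ)/(i+1) := by
    intro t
    induction t with
    | zero => simp
    | succ t ih =>
      rw [Finset.sum_range_succ, ih, add_comm,
        Finset.sum_Ico_consecutive _ (hmono t) (hmono0 t)]
  have huT : u T = 0 := by
    simp only [hu, hT, Finset.card_univ, Fintype.card_fin]
    omega
  have hu0 : u 0 = n := by simp [hu, hcov0]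
  calc (T:ℝ) = ∑ _j ∈ Finset.range T, (1:ℝ) := by simp
    _ ≤ ∑ j ∈ Finset.range T, (k:ℝ) * ∑ i ∈ Finset.Ico (u (j+1)) (u j), (1:ℝ)/(i+1) :=
        Finset.sum_le_sum (fun j hj => hstep j (Finset.mem_range.1 hj))
    _ = (k:ℝ) * ∑ j ∈ Finset.range T, ∑ i ∈ Finset.Ico (u (j+1)) (u j), (1:ℝ)/(i+1) := by
        rw [Finset.mul_sum]
    _ = (k:ℝ) * ∑ i ∈ Finset.Ico (u T) (u 0), (1:ℝ)/(i+1) := by rw [htel T]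
    _ = (k:ℝ) * ∑ i ∈ Finset.range n, (1:ℝ)/(i+1) := by
        rw [huT, hu0, Finset.range_eq_Ico]
end
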